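/- arXiv:2311.02808 — 2 statements merged into one kernel-verified Lean document; each statement's English description precedes it below -/
import Mathlib

section
/- For any fixed v in (0,1), the sum over k from 0 to m of the absolute values of the derivatives of the Bernstein basis polynomials, i.e. ∑_{k=0}^m |d/dv [C(m,k) v^k (1-v)^{m-k}]|, is O(m^{1/2}) as m → ∞; more precisely it is asymptotically equivalent to sqrt(2/π) · m^{1/2} / sqrt(v(1-v)). -/
open Filter Real

/-- Bernstein basis polynomial `P_{m,k}(v) = C(m,k) v^k (1-v)^{m-k}`. -/
noncomputable def bern (m k : ℕ) (v : ℝ) : ℝ := (m.choose k : ℝ) * v ^ k * (1 - v) ^ (m - k)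

/-!
Since `P'_{n+1,k} = (n+1) (P_{n,k-1} - P_{n,k})`, the sum is `n+1` times the total variation
of `k ↦ P_{n,k}(v)` (extended by zero). The ratio `P_{n,k+1} / P_{n,k} = (n-k) v / ((k+1)(1-v))`
shows that this sequence is unimodal with mode `t = ⌊(n+1) v⌋`, so the total variation is
`2 P_{n,t}(v)`. Stirling's formula then gives the local limit
`√n P_{n,j}(v) → 1/√(2π v(1-v))` for every `j = n v + O(1)`: the factorials contribute
`1/√(2π v(1-v) n)` and the remaining factor `(n v/j)^j (n(1-v)/(n-j))^(n-j)` tends to `1`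
because `x log(a/x) = a - x + O((x-a)²/a)`.
-/

open Finset Topology Stirling

lemma bern_eq_eval_bernsteinPolynomial (m k : ℕ) :
    bern m k = fun v => (bernsteinPolynomial ℝ m k).eval v := by
  ext v
  simp [bernsteinPolynomial, bern]

lemma bern_nonneg {v : ℝ} (h0 : 0 ≤ v) (h1 : v ≤ 1) (m k : ℕ) : 0 ≤ bern m k v := by
  have : 0 ≤ 1 - v := by linarith
  unfold bern
  positivity

lemma bern_eq_zero_of_lt {m k : ℕ} (h : m < k) (v : ℝ) : bern m k v = 0 := by
  simp [bern, Nat.choose_eq_zero_of_lt h]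

lemma deriv_bern_succ_zero (n : ℕ) (v : ℝ) :
    deriv (bern (n + 1) 0) v = -(n + 1) * bern n 0 v := by
  simp [bern_eq_eval_bernsteinPolynomial, Polynomial.deriv, bernsteinPolynomial.derivative_zero]

lemma deriv_bern_succ_succ (n j : ℕ) (v : ℝ) :
    deriv (bern (n + 1) (j + 1)) v = (n + 1) * (bern n j v - bern n (j + 1) v) := by
  simp [bern_eq_eval_bernsteinPolynomial, Polynomial.deriv, bernsteinPolynomial.derivative_succ]

-- `n - j` is a real subtraction: for `j ≥ n` both sides vanish.
lemma bern_succ_mul (n j : ℕ) (v : ℝ) :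
    bern n (j + 1) v * ((j + 1) * (1 - v)) = bern n j v * ((n - j) * v) := by
  rcases lt_or_ge j n with hj | hj
  · obtain ⟨k, rfl⟩ : ∃ k, n = j + 1 + k := ⟨n - j - 1, by omega⟩
    have hchoose :
        ((j + 1 + k).choose (j + 1) : ℝ) * (j + 1) = (j + 1 + k).choose j * (k + 1) := by
      have := Nat.choose_succ_right_eq (j + 1 + k) j
      rw [show j + 1 + k - j = k + 1 by omega] at this
      exact_mod_cast this
    simp only [bern, show j + 1 + k - (j + 1) = k by omega, show j + 1 + k - j = k + 1 by omega]
    push_cast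
    linear_combination v ^ j * (1 - v) ^ k * (v * (1 - v)) * hchoose
  · rcases hj.eq_or_lt with rfl | hj
    · simp [bern_eq_zero_of_lt (Nat.lt_succ_self n)]
    · simp [bern_eq_zero_of_lt hj, bern_eq_zero_of_lt (Nat.lt_succ_of_lt hj)]

section Unimodal

variable {v : ℝ} {n j : ℕ}

lemma bern_le_bern_succ (h0 : 0 ≤ v) (h1 : v < 1) (h : (j + 1 : ℝ) ≤ (n + 1) * v) :
    bern n j v ≤ bern n (j + 1) v := by
  have hpos : 0 < (j + 1 : ℝ) * (1 - v) := mul_pos (by positivity) (by linarith)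
  refine le_of_mul_le_mul_right ?_ hpos
  rw [bern_succ_mul]
  exact mul_le_mul_of_nonneg_left (by linarith) (bern_nonneg h0 h1.le n j)

lemma bern_succ_le_bern (h0 : 0 ≤ v) (h1 : v < 1) (h : (n + 1) * v ≤ (j + 1 : ℝ)) :
    bern n (j + 1) v ≤ bern n j v := by
  have hpos : 0 < (j + 1 : ℝ) * (1 - v) := mul_pos (by positivity) (by linarith)
  refine le_of_mul_le_mul_right ?_ hpos
  rw [bern_succ_mul]
  exact mul_le_mul_of_nonneg_left (by linarith) (bern_nonneg h0 h1.le n j)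

end Unimodal

lemma sum_range_abs_sub_eq_of_unimodal (f : ℕ → ℝ) {t N : ℕ} (htN : t ≤ N)
    (hmono : ∀ i < t, f i ≤ f (i + 1)) (hanti : ∀ i, t ≤ i → f (i + 1) ≤ f i) :
    ∑ i ∈ range N, |f (i + 1) - f i| = 2 * f t - f 0 - f N := by
  induction N, htN using Nat.le_induction with
  | base =>
    rw [sum_congr rfl fun i hi => abs_of_nonneg (sub_nonneg.2 (hmono i (mem_range.1 hi))),
      sum_range_sub]
    ring
  | succ N htN ih =>
    rw [sum_range_succ, ih, abs_of_nonpos (sub_nonpos.2 (hanti N htN))]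
    ring

lemma sum_abs_deriv_bern_succ {v : ℝ} (h0 : 0 ≤ v) (h1 : v < 1) (n : ℕ) :
    ∑ k ∈ range (n + 1 + 1), |deriv (bern (n + 1) k) v| =
      2 * (n + 1) * bern n ⌊(n + 1) * v⌋₊ v := by
  set t := ⌊((n : ℝ) + 1) * v⌋₊
  have ht : (t : ℝ) ≤ (n + 1) * v := Nat.floor_le (by positivity)
  have ht' : (n + 1) * v < (t : ℝ) + 1 := Nat.lt_floor_add_one _
  have htN : t ≤ n + 1 := by
    have : (t : ℝ) ≤ n + 1 := by nlinarith
    exact_mod_cast this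
  have hvariation :
      ∑ j ∈ range (n + 1), |bern n (j + 1) v - bern n j v| = 2 * bern n t v - bern n 0 v := by
    rw [sum_range_abs_sub_eq_of_unimodal (bern n · v) htN, bern_eq_zero_of_lt (Nat.lt_succ_self n)]
    · ring
    · intro i hi
      have : (i : ℝ) + 1 ≤ t := by exact_mod_cast hi
      exact bern_le_bern_succ h0 h1 (by linarith)
    · intro i hi
      have : (t : ℝ) ≤ i := by exact_mod_cast hi
      exact bern_succ_le_bern h0 h1 (by linarith)
  have hsucc (j : ℕ) :
      |deriv (bern (n + 1) (j + 1)) v| = (n + 1) * |bern n (j + 1) v - bern n j v| := by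
    rw [deriv_bern_succ_succ, abs_mul, abs_sub_comm,
      abs_of_nonneg (by positivity : (0 : ℝ) ≤ n + 1)]
  have hzero : |deriv (bern (n + 1) 0) v| = (n + 1) * bern n 0 v := by
    rw [deriv_bern_succ_zero, abs_mul, abs_neg, abs_of_nonneg (by positivity : (0 : ℝ) ≤ n + 1),
      abs_of_nonneg (bern_nonneg h0 h1.le n 0)]
  rw [sum_range_succ', sum_congr rfl fun j _ => hsucc j, ← mul_sum, hvariation, hzero]
  ring

lemma factorial_eq_stirlingSeq_mul {n : ℕ} (hn : n ≠ 0) :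
    (n.factorial : ℝ) = stirlingSeq n * (√(2 * n) * (n / exp 1) ^ n) := by
  have : 0 < (n : ℝ) := by positivity
  rw [stirlingSeq, div_mul_cancel₀ _ (by positivity)]

lemma sqrt_mul_bern_eq_stirlingSeq_mul {n j k : ℕ} (hj : j ≠ 0) (hk : k ≠ 0) (hn : j + k = n)
    (p : ℝ) :
    √n * bern n j p = stirlingSeq n / (stirlingSeq j * stirlingSeq k) * √(n ^ 2 / (2 * j * k)) *
      ((n * p / j) ^ j * (n * (1 - p) / k) ^ k) := by
  subst hn
  have hj' : (0 : ℝ) < j := by positivity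
  have hk' : (0 : ℝ) < k := by positivity
  have hsqrt : √((j + k : ℕ) : ℝ) * √(2 * (j + k : ℕ)) =
      √(((j + k : ℕ) : ℝ) ^ 2 / (2 * j * k)) * (√(2 * j) * √(2 * k)) := by
    rw [← sqrt_mul (by positivity), ← sqrt_mul (by positivity), ← sqrt_mul (by positivity)]
    congr 1
    field_simp
  rw [bern, Nat.cast_choose ℝ (Nat.le_add_right j k), Nat.add_sub_cancel_left,
    factorial_eq_stirlingSeq_mul (by omega), factorial_eq_stirlingSeq_mul hj,
    factorial_eq_stirlingSeq_mul hk]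
  simp only [div_pow, mul_pow, pow_add]
  field_simp
  linear_combination
    stirlingSeq (j + k) * p ^ j * (1 - p) ^ k / (stirlingSeq j * stirlingSeq k) * hsqrt

section BoundedDeviation

variable {j : ℕ → ℕ} {p C : ℝ}

lemma tendsto_atTop_of_abs_sub_mul_le (hp : 0 < p)
    (hj : ∀ᶠ n in atTop, |(j n : ℝ) - n * p| ≤ C) : Tendsto j atTop atTop := by
  rw [← tendsto_natCast_atTop_iff (R := ℝ)]
  refine tendsto_atTop_mono' _ (hj.mono fun n h => ?_)
    (tendsto_atTop_add_const_right _ (-C) (tendsto_natCast_atTop_atTop.atTop_mul_const hp))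
  linarith [(abs_le.1 h).1]

lemma tendsto_div_of_abs_sub_mul_le (hj : ∀ᶠ n in atTop, |(j n : ℝ) - n * p| ≤ C) :
    Tendsto (fun n => (j n : ℝ) / n) atTop (𝓝 p) := by
  rw [← tendsto_sub_nhds_zero_iff]
  refine squeeze_zero_norm' ?_ (tendsto_const_div_atTop_nhds_zero_nat C)
  filter_upwards [hj, eventually_gt_atTop 0] with n h hn
  have hn' : (0 : ℝ) < n := by exact_mod_cast hn
  rw [Real.norm_eq_abs, show (j n : ℝ) / n - p = ((j n : ℝ) - n * p) / n by field_simp,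
    abs_div, Nat.abs_cast]
  gcongr

lemma abs_sub_sub_mul_le (hp : p < 1) (hj : ∀ᶠ n in atTop, |(j n : ℝ) - n * p| ≤ C) :
    ∀ᶠ n in atTop, |((n - j n : ℕ) : ℝ) - n * (1 - p)| ≤ C := by
  have hlarge : ∀ᶠ n : ℕ in atTop, C < n * (1 - p) :=
    (tendsto_natCast_atTop_atTop.atTop_mul_const (sub_pos.2 hp)).eventually_gt_atTop C
  filter_upwards [hj, hlarge] with n h hn
  have hjn : j n ≤ n := by
    have : (j n : ℝ) ≤ n := by linarith [(abs_le.1 h).2]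
    exact_mod_cast this
  rw [Nat.cast_sub hjn, show (n : ℝ) - j n - n * (1 - p) = -((j n : ℝ) - n * p) by ring,
    abs_neg]
  exact h

end BoundedDeviation

lemma mul_log_div_le {a x : ℝ} (ha : 0 < a) (hx : 0 < x) : x * log (a / x) ≤ a - x := by
  have := mul_le_mul_of_nonneg_left (log_le_sub_one_of_pos (div_pos ha hx)) hx.le
  rwa [mul_sub, mul_div_cancel₀ _ hx.ne', mul_one] at this

lemma sub_sub_sq_div_le_mul_log_div {a x : ℝ} (ha : 0 < a) (hx : 0 < x) :
    a - x - (x - a) ^ 2 / a ≤ x * log (a / x) := by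
  have := mul_le_mul_of_nonneg_left (one_sub_inv_le_log_of_pos (div_pos ha hx)) hx.le
  rw [inv_div] at this
  refine le_trans (le_of_eq ?_) this
  field_simp
  ring

lemma sq_sub_div_le_of_abs_sub_le {x a C : ℝ} (ha : 0 ≤ a) (h : |x - a| ≤ C) :
    (x - a) ^ 2 / a ≤ C ^ 2 / a := by
  rw [← sq_abs]
  exact div_le_div_of_nonneg_right (pow_le_pow_left₀ (abs_nonneg _) h 2) ha

lemma mul_log_add_mul_log_mem_Icc {n p C x y : ℝ} (hn : 0 < n) (hp0 : 0 < p) (hp1 : p < 1)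
    (hx : 0 < x) (hy : 0 < y) (hxy : x + y = n) (hxC : |x - n * p| ≤ C)
    (hyC : |y - n * (1 - p)| ≤ C) :
    x * log (n * p / x) + y * log (n * (1 - p) / y) ∈
      Set.Icc (-(C ^ 2 / p + C ^ 2 / (1 - p)) / n) 0 := by
  have ha : 0 < n * p := mul_pos hn hp0
  have hb : 0 < n * (1 - p) := mul_pos hn (sub_pos.2 hp1)
  have hxd := sq_sub_div_le_of_abs_sub_le ha.le hxC
  have hyd := sq_sub_div_le_of_abs_sub_le hb.le hyC
  have hCn : -(C ^ 2 / p + C ^ 2 / (1 - p)) / n = -(C ^ 2 / (n * p) + C ^ 2 / (n * (1 - p))) := by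
    field_simp
  rw [hCn]
  constructor
  · linarith [sub_sub_sq_div_le_mul_log_div ha hx, sub_sub_sq_div_le_mul_log_div hb hy]
  · linarith [mul_log_div_le ha hx, mul_log_div_le hb hy]

lemma tendsto_pow_mul_pow_of_abs_sub_mul_le {p C : ℝ} (hp0 : 0 < p) (hp1 : p < 1)
    {j k : ℕ → ℕ} (hj : ∀ᶠ n in atTop, |(j n : ℝ) - n * p| ≤ C)
    (hk : ∀ᶠ n in atTop, |(k n : ℝ) - n * (1 - p)| ≤ C)
    (hjk : ∀ᶠ n in atTop, j n + k n = n) :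
    Tendsto (fun n : ℕ => (n * p / j n) ^ j n * (n * (1 - p) / k n) ^ k n) atTop (𝓝 1) := by
  have hq : 0 < 1 - p := sub_pos.2 hp1
  set E : ℕ → ℝ := fun n => j n * log (n * p / j n) + k n * log (n * (1 - p) / k n)
  have hpos : ∀ᶠ n in atTop, 0 < j n ∧ 0 < k n :=
    ((tendsto_atTop_of_abs_sub_mul_le hp0 hj).eventually_gt_atTop 0).and
      ((tendsto_atTop_of_abs_sub_mul_le hq hk).eventually_gt_atTop 0)
  have hE : ∀ᶠ n : ℕ in atTop, E n ∈ Set.Icc (-(C ^ 2 / p + C ^ 2 / (1 - p)) / n) 0 := by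
    filter_upwards [hj, hk, hjk, hpos, eventually_gt_atTop 0] with n hjn hkn hn ⟨hj0, hk0⟩ hn0
    exact mul_log_add_mul_log_mem_Icc (by exact_mod_cast hn0) hp0 hp1 (by exact_mod_cast hj0)
      (by exact_mod_cast hk0) (by exact_mod_cast hn) hjn hkn
  have hE0 : Tendsto E atTop (𝓝 0) :=
    tendsto_of_tendsto_of_tendsto_of_le_of_le' (tendsto_const_div_atTop_nhds_zero_nat _)
      tendsto_const_nhds (hE.mono fun _ h => h.1) (hE.mono fun _ h => h.2)
  have hexpE := (continuous_exp.tendsto 0).comp hE0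
  rw [exp_zero] at hexpE
  refine hexpE.congr' ?_
  filter_upwards [hpos, eventually_gt_atTop 0] with n ⟨hj0, hk0⟩ hn0
  have hn' : (0 : ℝ) < n := by exact_mod_cast hn0
  have hj' : (0 : ℝ) < j n := by exact_mod_cast hj0
  have hk' : (0 : ℝ) < k n := by exact_mod_cast hk0
  simp only [Function.comp_apply, E, exp_add, ← log_pow,
    exp_log (pow_pos (div_pos (mul_pos hn' hp0) hj') _),
    exp_log (pow_pos (div_pos (mul_pos hn' hq) hk') _)]

theorem tendsto_sqrt_mul_bern {p C : ℝ} (hp0 : 0 < p) (hp1 : p < 1) {j : ℕ → ℕ}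
    (hj : ∀ᶠ n in atTop, |(j n : ℝ) - n * p| ≤ C) :
    Tendsto (fun n : ℕ => √n * bern n (j n) p) atTop
      (𝓝 (1 / √(2 * π * (p * (1 - p))))) := by
  set k : ℕ → ℕ := fun n => n - j n
  have hk : ∀ᶠ n in atTop, |(k n : ℝ) - n * (1 - p)| ≤ C := abs_sub_sub_mul_le hp1 hj
  have hj_top := tendsto_atTop_of_abs_sub_mul_le hp0 hj
  have hk_top := tendsto_atTop_of_abs_sub_mul_le (sub_pos.2 hp1) hk
  have hjk : ∀ᶠ n in atTop, j n + k n = n := (hk_top.eventually_gt_atTop 0).mono fun n hn =>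
    Nat.add_sub_of_le (Nat.le_of_lt (Nat.lt_of_sub_pos hn))
  have hstirling : Tendsto (fun n => stirlingSeq n / (stirlingSeq (j n) * stirlingSeq (k n)))
      atTop (𝓝 (√π / (√π * √π))) :=
    tendsto_stirlingSeq_sqrt_pi.div ((tendsto_stirlingSeq_sqrt_pi.comp hj_top).mul
      (tendsto_stirlingSeq_sqrt_pi.comp hk_top)) (by positivity)
  have hvariance : Tendsto (fun n : ℕ => √(n ^ 2 / (2 * j n * k n))) atTop
      (𝓝 √(1 / (2 * p * (1 - p)))) := by
    have hden : Tendsto (fun n : ℕ => 2 * ((j n : ℝ) / n) * ((k n : ℝ) / n)) atTop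
        (𝓝 (2 * p * (1 - p))) :=
      (tendsto_div_of_abs_sub_mul_le hj).const_mul 2 |>.mul (tendsto_div_of_abs_sub_mul_le hk)
    refine (tendsto_const_nhds.div hden (by positivity)).congr' ?_ |>.sqrt
    filter_upwards [eventually_gt_atTop 0] with n hn
    have : (0 : ℝ) < n := by exact_mod_cast hn
    simp only [Pi.div_apply]
    field_simp
  refine Tendsto.congr' ?_ (((hstirling.mul hvariance).mul
    (tendsto_pow_mul_pow_of_abs_sub_mul_le hp0 hp1 hj hk hjk)).trans_eq ?_)
  · filter_upwards [hj_top.eventually_gt_atTop 0, hk_top.eventually_gt_atTop 0, hjk]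
      with n hj0 hk0 hn
    exact (sqrt_mul_bern_eq_stirlingSeq_mul hj0.ne' hk0.ne' hn p).symm
  · rw [mul_one, div_mul_cancel_left₀ (sqrt_ne_zero'.2 pi_pos), ← sqrt_inv,
      ← sqrt_mul (inv_nonneg.2 pi_pos.le), one_div (√_), ← sqrt_inv, one_div, ← mul_inv]
    ring_nf

lemma tendsto_sqrt_succ_div_sqrt :
    Tendsto (fun n : ℕ => √((n : ℝ) + 1) / √n) atTop (𝓝 1) := by
  have := ((tendsto_natCast_div_add_atTop (1 : ℝ)).inv₀ one_ne_zero).sqrt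
  rw [inv_one, sqrt_one] at this
  refine this.congr fun n => ?_
  rw [inv_div, sqrt_div' _ (Nat.cast_nonneg n)]

lemma abs_floor_succ_mul_sub_mul_le {v : ℝ} (h0 : 0 ≤ v) (h1 : v ≤ 1) (n : ℕ) :
    |(⌊(n + 1) * v⌋₊ : ℝ) - n * v| ≤ 1 := by
  have := Nat.floor_le (by positivity : 0 ≤ ((n : ℝ) + 1) * v)
  have := Nat.lt_floor_add_one (((n : ℝ) + 1) * v)
  rw [abs_le]
  constructor <;> nlinarith

lemma tendsto_sqrt_succ_mul_bern_floor {v : ℝ} (h0 : 0 < v) (h1 : v < 1) :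
    Tendsto (fun n : ℕ => √((n : ℝ) + 1) * bern n ⌊(n + 1) * v⌋₊ v) atTop
      (𝓝 (1 / √(2 * π * (v * (1 - v))))) := by
  have := tendsto_sqrt_succ_div_sqrt.mul (tendsto_sqrt_mul_bern h0 h1
    (Eventually.of_forall (abs_floor_succ_mul_sub_mul_le h0.le h1.le)))
  rw [one_mul] at this
  refine this.congr' ?_
  filter_upwards [eventually_gt_atTop 0] with n hn
  have : 0 < √(n : ℝ) := sqrt_pos.2 (by exact_mod_cast hn)
  field_simp

lemma tendsto_sum_abs_deriv_bern_div {v : ℝ} (h0 : 0 < v) (h1 : v < 1) :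
    Tendsto (fun m : ℕ => (∑ k ∈ range (m + 1), |deriv (bern m k) v|) /
      (√(2 / π) * (m : ℝ) ^ ((1 : ℝ) / 2) / √(v * (1 - v)))) atTop (𝓝 1) := by
  rw [← tendsto_add_atTop_iff_nat 1]
  have hvq : 0 < v * (1 - v) := mul_pos h0 (by linarith)
  have hsqrt : √(2 * π * (v * (1 - v))) = π * √(2 / π) * √(v * (1 - v)) := by
    rw [show 2 * π * (v * (1 - v)) = π ^ 2 * (2 / π) * (v * (1 - v)) by field_simp,
      sqrt_mul (by positivity), sqrt_mul (sq_nonneg _), sqrt_sq pi_pos.le]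
  have := (tendsto_sqrt_succ_mul_bern_floor h0 h1).mul_const √(2 * π * (v * (1 - v)))
  rw [one_div_mul_cancel (sqrt_ne_zero'.2 (by positivity))] at this
  refine this.congr fun n => ?_
  rw [sum_abs_deriv_bern_succ h0.le h1, hsqrt, Nat.cast_add_one, ← sqrt_eq_rpow]
  have hn : 0 < √((n : ℝ) + 1) := sqrt_pos.2 (by positivity)
  have h2π : 0 < √(2 / π) := sqrt_pos.2 (by positivity)
  field_simp
  rw [sq_sqrt (by positivity), sq_sqrt (by positivity)]
  field_simp

/-- For fixed `v ∈ (0,1)`, `∑_{k=0}^m |P'_{m,k}(v)|` is `O(m^{1/2})` as `m → ∞`, and is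
asymptotically equivalent to `sqrt(2/π) · m^{1/2} / sqrt(v(1-v))`. -/
theorem bernstein_deriv_abs_sum_asymptotic (v : ℝ) (hv : v ∈ Set.Ioo (0:ℝ) 1) :
    (Asymptotics.IsBigO atTop
      (fun m : ℕ => ∑ k ∈ Finset.range (m + 1), |deriv (bern m k) v|)
      (fun m : ℕ => (m : ℝ) ^ ((1:ℝ)/2))) ∧
    Tendsto
      (fun m : ℕ => (∑ k ∈ Finset.range (m + 1), |deriv (bern m k) v|) /
        (Real.sqrt (2 / Real.pi) * (m : ℝ) ^ ((1:ℝ)/2) / Real.sqrt (v * (1 - v))))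
      atTop (nhds 1) := by
  have hratio := tendsto_sum_abs_deriv_bern_div hv.1 hv.2
  refine ⟨(Asymptotics.isEquivalent_of_tendsto_one hratio).isBigO.trans ?_, hratio⟩
  exact (Asymptotics.isBigO_const_mul_self (√(2 / π) / √(v * (1 - v))) _ _).congr_left
    fun m => by ring
end

section
/- Suppose C : [0,1]^3 → ℝ is such that its partial derivative C_v(u_1, u_2 | v) = ∂C(u_1,u_2,v)/∂v exists and is Lipschitz continuous on [0,1]^3 with Lipschitz constant L (with respect to the sup metric on [0,1]^3). Define the Bernstein smoother B(C; u_1,u_2,v) = ∑_{h_1=0}^{l_1} ∑_{h_2=0}^{l_2} ∑_{k=0}^{m} C(h_1/l_1, h_2/l_2, k/m) P_{l_1,h_1}(u_1) P_{l_2,h_2}(u_2) P_{m,k}(v) and C^{(1)}(u_1,u_2|v) = ∂B(C;u_1,u_2,v)/∂v. Then for every v ∈ [0,1], sup_{(u_1,u_2) ∈ [0,1]^2} |C^{(1)}(u_1,u_2|v) − C_v(u_1,u_2|v)| ≤ L/m + L(1/(2√l_1) + 1/(2√l_2) + 1/(2√(m−1))). -/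
/-- The trivariate Bernstein smoother of `C` with degrees `l₁, l₂, m`. -/
noncomputable def bernSmooth (C : ℝ → ℝ → ℝ → ℝ) (l₁ l₂ m : ℕ) (u₁ u₂ v : ℝ) : ℝ :=
  ∑ h₁ ∈ Finset.range (l₁ + 1), ∑ h₂ ∈ Finset.range (l₂ + 1), ∑ k ∈ Finset.range (m + 1),
    C (h₁ / l₁) (h₂ / l₂) (k / m) * bern l₁ h₁ u₁ * bern l₂ h₂ u₂ * bern m k v

open Finset

lemma bern_eq_eval (n k : ℕ) (v : ℝ) : bern n k v = (bernsteinPolynomial ℝ n k).eval v := by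
  simp [bernsteinPolynomial, bern]

lemma bern_nonneg_s4 (n k : ℕ) {v : ℝ} (hv : v ∈ Set.Icc (0:ℝ) 1) : 0 ≤ bern n k v := by
  have : 0 ≤ 1 - v := sub_nonneg.2 hv.2
  have := hv.1
  unfold bern; positivity

lemma sum_bern (n : ℕ) (v : ℝ) : ∑ k ∈ range (n + 1), bern n k v = 1 := by
  simpa [Polynomial.eval_finsetSum, bern_eq_eval] using
    congrArg (Polynomial.eval v) (bernsteinPolynomial.sum ℝ n)

lemma sum_sq_mul_bern {n : ℕ} (hn : n ≠ 0) (v : ℝ) :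
    ∑ k ∈ range (n + 1), ((k:ℝ) / n - v) ^ 2 * bern n k v = v * (1 - v) / n := by
  have h := congrArg (Polynomial.eval v) (bernsteinPolynomial.variance ℝ n)
  simp only [Polynomial.eval_finsetSum, Polynomial.eval_mul, Polynomial.eval_pow,
    Polynomial.eval_sub, Polynomial.eval_natCast, nsmul_eq_mul, Polynomial.eval_X,
    Polynomial.eval_one, ← bern_eq_eval] at h
  have hn' : (n:ℝ) ≠ 0 := Nat.cast_ne_zero.2 hn
  rw [eq_div_iff hn']
  apply mul_left_cancel₀ hn'
  calc (n:ℝ) * ((∑ k ∈ range (n + 1), ((k:ℝ) / n - v) ^ 2 * bern n k v) * n)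
      = ∑ k ∈ range (n + 1), ((n:ℝ) * v - k) ^ 2 * bern n k v := by
        rw [sum_mul, mul_sum]
        refine sum_congr rfl fun k _ => ?_
        field_simp
        ring
    _ = n * (v * (1 - v)) := by rw [h]; ring

lemma sum_abs_mul_bern_le {n : ℕ} (hn : n ≠ 0) {v : ℝ} (hv : v ∈ Set.Icc (0:ℝ) 1) :
    ∑ k ∈ range (n + 1), |(k:ℝ) / n - v| * bern n k v ≤ 1 / (2 * Real.sqrt n) := by
  have hn' : (0:ℝ) < n := by positivity
  have cauchy_schwarz : (∑ k ∈ range (n + 1), |(k:ℝ) / n - v| * bern n k v) ^ 2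
      ≤ (∑ k ∈ range (n + 1), ((k:ℝ) / n - v) ^ 2 * bern n k v)
        * ∑ k ∈ range (n + 1), bern n k v :=
    sum_sq_le_sum_mul_sum_of_sq_le_mul _
      (fun k _ => mul_nonneg (sq_nonneg _) (bern_nonneg_s4 n k hv))
      (fun k _ => bern_nonneg_s4 n k hv) (fun k _ => le_of_eq (by rw [mul_pow, sq_abs]; ring))
  rw [sum_sq_mul_bern hn, sum_bern, mul_one] at cauchy_schwarz
  have hsq : (1 / (2 * Real.sqrt n)) ^ 2 = 1 / (4 * n) := by
    rw [div_pow, mul_pow, Real.sq_sqrt hn'.le]; norm_num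
  refine le_of_sq_le_sq ?_ (by positivity)
  rw [hsq]
  refine cauchy_schwarz.trans ?_
  rw [div_le_div_iff₀ hn' (by positivity)]
  nlinarith [sq_nonneg (v - 1/2)]

lemma hasDerivAt_bern (n k : ℕ) (v : ℝ) :
    HasDerivAt (bern n k)
      (n * ((if k = 0 then 0 else bern (n - 1) (k - 1) v) - bern (n - 1) k v)) v := by
  have h := (bernsteinPolynomial ℝ n k).hasDerivAt v
  rw [show bern n k = fun t => (bernsteinPolynomial ℝ n k).eval t from funext (bern_eq_eval n k)]
  cases k with
  | zero => simpa [bernsteinPolynomial.derivative_zero, bern_eq_eval] using h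
  | succ k => simpa [bernsteinPolynomial.derivative_succ, bern_eq_eval] using h

lemma sum_range_mul_pred_sub (n : ℕ) (a D : ℕ → ℝ) :
    ∑ k ∈ range (n + 1), a k * ((if k = 0 then 0 else D (k - 1)) - D k)
      = ∑ k ∈ range n, (a (k + 1) - a k) * D k - a n * D n := by
  induction n with
  | zero => simp
  | succ n ih =>
    rw [sum_range_succ, ih, sum_range_succ]
    simp only [Nat.succ_ne_zero, if_false, Nat.add_sub_cancel]
    ring

lemma hasDerivAt_sum_mul_bern (m : ℕ) (a : ℕ → ℝ) (v : ℝ) :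
    HasDerivAt (fun t => ∑ k ∈ range (m + 1), a k * bern m k t)
      (m * ∑ k ∈ range m, (a (k + 1) - a k) * bern (m - 1) k v) v := by
  refine (HasDerivAt.fun_sum fun k _ => (hasDerivAt_bern m k v).const_mul (a k)).congr_deriv ?_
  simp_rw [mul_left_comm (a _) (m:ℝ)]
  rw [← mul_sum, sum_range_mul_pred_sub m a (fun k => bern (m - 1) k v)]
  rcases m with _ | m
  · simp
  · simp [bern]

lemma hasDerivAt_bernSmooth (C : ℝ → ℝ → ℝ → ℝ) (l₁ l₂ m : ℕ) (u₁ u₂ v : ℝ) :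
    HasDerivAt (bernSmooth C l₁ l₂ m u₁ u₂)
      (∑ h₁ ∈ range (l₁ + 1), ∑ h₂ ∈ range (l₂ + 1), ∑ k ∈ range m,
        m * (C (h₁ / l₁) (h₂ / l₂) ((k + 1 : ℕ) / m) - C (h₁ / l₁) (h₂ / l₂) (k / m))
          * (bern l₁ h₁ u₁ * bern l₂ h₂ u₂ * bern (m - 1) k v)) v := by
  refine HasDerivAt.fun_sum fun h₁ _ => HasDerivAt.fun_sum fun h₂ _ => ?_
  refine (hasDerivAt_sum_mul_bern m
    (fun k => C (h₁ / l₁) (h₂ / l₂) (k / m) * bern l₁ h₁ u₁ * bern l₂ h₂ u₂) v).congr_deriv ?_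
  rw [mul_sum]
  exact sum_congr rfl fun k _ => by ring

lemma abs_sum_mul_prod_sub_le {ι κ μ : Type*} {s : Finset ι} {t : Finset κ} {u : Finset μ}
    {p : ι → ℝ} {q : κ → ℝ} {r : μ → ℝ} (hp : ∀ i ∈ s, 0 ≤ p i) (hq : ∀ j ∈ t, 0 ≤ q j)
    (hr : ∀ k ∈ u, 0 ≤ r k) (hp1 : ∑ i ∈ s, p i = 1) (hq1 : ∑ j ∈ t, q j = 1)
    (hr1 : ∑ k ∈ u, r k = 1) {a : ι → κ → μ → ℝ} {c : ℝ} {α : ι → ℝ} {β : κ → ℝ}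
    {γ : μ → ℝ} {δ : ℝ} (h : ∀ i ∈ s, ∀ j ∈ t, ∀ k ∈ u, |a i j k - c| ≤ α i + β j + γ k + δ) :
    |∑ i ∈ s, ∑ j ∈ t, ∑ k ∈ u, a i j k * (p i * q j * r k) - c|
      ≤ ∑ i ∈ s, α i * p i + ∑ j ∈ t, β j * q j + ∑ k ∈ u, γ k * r k + δ := by
  have center : ∑ i ∈ s, ∑ j ∈ t, ∑ k ∈ u, a i j k * (p i * q j * r k) - c
      = ∑ i ∈ s, ∑ j ∈ t, ∑ k ∈ u, (a i j k - c) * (p i * q j * r k) := by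
    simp [sub_mul, sum_sub_distrib, ← mul_sum, hp1, hq1, hr1]
  calc |∑ i ∈ s, ∑ j ∈ t, ∑ k ∈ u, a i j k * (p i * q j * r k) - c|
      ≤ ∑ i ∈ s, ∑ j ∈ t, ∑ k ∈ u, (α i + β j + γ k + δ) * (p i * q j * r k) := by
        rw [center]
        refine (abs_sum_le_sum_abs _ _).trans (sum_le_sum fun i hi => ?_)
        refine (abs_sum_le_sum_abs _ _).trans (sum_le_sum fun j hj => ?_)
        refine (abs_sum_le_sum_abs _ _).trans (sum_le_sum fun k hk => ?_)
        have hw : 0 ≤ p i * q j * r k := mul_nonneg (mul_nonneg (hp i hi) (hq j hj)) (hr k hk)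
        rw [abs_mul, abs_of_nonneg hw]
        exact mul_le_mul_of_nonneg_right (h i hi j hj k hk) hw
    _ = ∑ i ∈ s, ∑ j ∈ t, ∑ k ∈ u, (α i * p i * q j * r k + p i * (β j * q j) * r k
          + p i * q j * (γ k * r k) + δ * (p i * q j * r k)) :=
        sum_congr rfl fun i _ => sum_congr rfl fun j _ => sum_congr rfl fun k _ => by ring
    _ = ∑ i ∈ s, α i * p i + ∑ j ∈ t, β j * q j + ∑ k ∈ u, γ k * r k + δ := by
        simp only [sum_add_distrib, ← mul_sum, ← sum_mul, hp1, hq1, hr1, mul_one, one_mul]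

lemma natCast_div_mem_Icc {h n : ℕ} (hh : h ≤ n) : (h : ℝ) / n ∈ Set.Icc (0:ℝ) 1 :=
  ⟨by positivity, div_le_one_of_le₀ (by exact_mod_cast hh) n.cast_nonneg⟩

lemma natCast_div_pred_mem_Icc {k m : ℕ} (hk : k < m) :
    (k : ℝ) / ((m : ℝ) - 1) ∈ Set.Icc ((k : ℝ) / m) (((k + 1 : ℕ) : ℝ) / m) := by
  -- for `m = 1` the point is `0 / 0 = 0`
  rcases eq_or_ne m 1 with rfl | hm
  · obtain rfl : k = 0 := by omega
    simp
  have hm' : (1 : ℝ) < m := by exact_mod_cast (show 1 < m by omega)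
  have hk' : (k : ℝ) + 1 ≤ m := by exact_mod_cast hk
  constructor
  · exact div_le_div_of_nonneg_left k.cast_nonneg (by linarith) (by linarith)
  · rw [div_le_div_iff₀ (by linarith) (by linarith)]
    push_cast
    nlinarith

lemma abs_slope_sub_le {C Cv : ℝ → ℝ → ℝ → ℝ} {L : ℝ}
    (hderiv : ∀ u₁ ∈ Set.Icc (0:ℝ) 1, ∀ u₂ ∈ Set.Icc (0:ℝ) 1, ∀ v ∈ Set.Icc (0:ℝ) 1,
      HasDerivAt (fun t => C u₁ u₂ t) (Cv u₁ u₂ v) v)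
    (hLip : ∀ u₁ ∈ Set.Icc (0:ℝ) 1, ∀ u₂ ∈ Set.Icc (0:ℝ) 1, ∀ v ∈ Set.Icc (0:ℝ) 1,
      ∀ u₁' ∈ Set.Icc (0:ℝ) 1, ∀ u₂' ∈ Set.Icc (0:ℝ) 1, ∀ v' ∈ Set.Icc (0:ℝ) 1,
      |Cv u₁ u₂ v - Cv u₁' u₂' v'| ≤ L * max |u₁ - u₁'| (max |u₂ - u₂'| |v - v'|))
    (hL : 0 ≤ L) {x y u₁ u₂ v : ℝ} (hx : x ∈ Set.Icc (0:ℝ) 1) (hy : y ∈ Set.Icc (0:ℝ) 1)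
    (hu₁ : u₁ ∈ Set.Icc (0:ℝ) 1) (hu₂ : u₂ ∈ Set.Icc (0:ℝ) 1) (hv : v ∈ Set.Icc (0:ℝ) 1)
    {m k : ℕ} (hk : k < m) :
    |m * (C x y ((k + 1 : ℕ) / m) - C x y (k / m)) - Cv u₁ u₂ v|
      ≤ L * |x - u₁| + L * |y - u₂| + L * |k / ((m:ℝ) - 1) - v| + L / m := by
  have hm : (0:ℝ) < m := by exact_mod_cast k.zero_le.trans_lt hk
  have hlt : (k : ℝ) / m < ((k + 1 : ℕ) : ℝ) / m := by gcongr; exact_mod_cast k.lt_succ_self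
  have hcell : Set.Icc ((k : ℝ) / m) (((k + 1 : ℕ) : ℝ) / m) ⊆ Set.Icc 0 1 :=
    Set.Icc_subset_Icc (natCast_div_mem_Icc hk.le).1 (natCast_div_mem_Icc hk).2
  obtain ⟨ξ, hξ, hslope⟩ := exists_hasDerivAt_eq_slope (C x y) (Cv x y) hlt
    (fun t ht => (hderiv x hx y hy t (hcell ht)).continuousAt.continuousWithinAt)
    (fun t ht => hderiv x hx y hy t (hcell (Set.Ioo_subset_Icc_self ht)))
  have hwidth : ((k + 1 : ℕ) : ℝ) / m - k / m = 1 / m := by push_cast; ring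
  rw [hwidth, div_div_eq_mul_div, div_one] at hslope
  have hξv : |ξ - v| ≤ |k / ((m:ℝ) - 1) - v| + 1 / m := by
    have hξk : |ξ - k / ((m:ℝ) - 1)| ≤ 1 / m := by
      rw [← Real.dist_eq, ← hwidth]
      exact Real.dist_le_of_mem_Icc (Set.Ioo_subset_Icc_self hξ) (natCast_div_pred_mem_Icc hk)
    linarith [abs_sub_le ξ (k / ((m:ℝ) - 1)) v]
  calc |m * (C x y ((k + 1 : ℕ) / m) - C x y (k / m)) - Cv u₁ u₂ v|
      = |Cv x y ξ - Cv u₁ u₂ v| := by rw [hslope, mul_comm]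
    _ ≤ L * max |x - u₁| (max |y - u₂| |ξ - v|) :=
      hLip x hx y hy ξ (hcell (Set.Ioo_subset_Icc_self hξ)) u₁ hu₁ u₂ hu₂ v hv
    _ ≤ L * (|x - u₁| + |y - u₂| + (|k / ((m:ℝ) - 1) - v| + 1 / m)) := by
      gcongr
      have := abs_nonneg (x - u₁)
      have := abs_nonneg (y - u₂)
      have := abs_nonneg (k / ((m:ℝ) - 1) - v)
      have := one_div_pos.2 hm
      exact max_le (by linarith) (max_le (by linarith) (by linarith))
    _ = L * |x - u₁| + L * |y - u₂| + L * |k / ((m:ℝ) - 1) - v| + L / m := by ring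

/-- If the partial derivative `C_v = ∂C/∂v` exists on `[0,1]³` and is Lipschitz with constant
`L` for the sup metric on `[0,1]³`, then the `v`-derivative of the Bernstein smoother satisfies
`sup_{(u₁,u₂)∈[0,1]²} |C⁽¹⁾(u₁,u₂|v) − C_v(u₁,u₂|v)| ≤ L/m + L(1/(2√l₁)+1/(2√l₂)+1/(2√(m−1)))`
for every `v ∈ [0,1]`. -/
theorem bernstein_smoother_deriv_approx
    (C Cv : ℝ → ℝ → ℝ → ℝ) (L : ℝ) (l₁ l₂ m : ℕ) (hl₁ : 1 ≤ l₁) (hl₂ : 1 ≤ l₂) (hm : 2 ≤ m)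
    (hderiv : ∀ u₁ ∈ Set.Icc (0:ℝ) 1, ∀ u₂ ∈ Set.Icc (0:ℝ) 1, ∀ v ∈ Set.Icc (0:ℝ) 1,
      HasDerivAt (fun t => C u₁ u₂ t) (Cv u₁ u₂ v) v)
    (hLip : ∀ u₁ ∈ Set.Icc (0:ℝ) 1, ∀ u₂ ∈ Set.Icc (0:ℝ) 1, ∀ v ∈ Set.Icc (0:ℝ) 1,
      ∀ u₁' ∈ Set.Icc (0:ℝ) 1, ∀ u₂' ∈ Set.Icc (0:ℝ) 1, ∀ v' ∈ Set.Icc (0:ℝ) 1,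
      |Cv u₁ u₂ v - Cv u₁' u₂' v'| ≤ L * max |u₁ - u₁'| (max |u₂ - u₂'| |v - v'|)) :
    ∀ v ∈ Set.Icc (0:ℝ) 1, ∀ u₁ ∈ Set.Icc (0:ℝ) 1, ∀ u₂ ∈ Set.Icc (0:ℝ) 1,
      |deriv (fun t => bernSmooth C l₁ l₂ m u₁ u₂ t) v - Cv u₁ u₂ v| ≤
        L / m + L * (1 / (2 * Real.sqrt l₁) + 1 / (2 * Real.sqrt l₂)
          + 1 / (2 * Real.sqrt ((m:ℝ) - 1))) := by
  intro v hv u₁ hu₁ u₂ hu₂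
  have hL : 0 ≤ L := by
    have := hLip 0 (by simp) 0 (by simp) 0 (by simp) 0 (by simp) 0 (by simp) 1 (by simp)
    norm_num at this
    exact (abs_nonneg _).trans this
  have hm₁ : m - 1 + 1 = m := by omega
  have hcast : ((m - 1 : ℕ) : ℝ) = (m : ℝ) - 1 := by
    rw [Nat.cast_sub (by omega), Nat.cast_one]
  have hsum : ∑ k ∈ range m, bern (m - 1) k v = 1 := hm₁ ▸ sum_bern (m - 1) v
  have habs : ∑ k ∈ range m, |(k : ℝ) / ((m : ℝ) - 1) - v| * bern (m - 1) k v
      ≤ 1 / (2 * Real.sqrt ((m : ℝ) - 1)) := by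
    simpa only [hm₁, hcast] using sum_abs_mul_bern_le (n := m - 1) (by omega) hv
  rw [(hasDerivAt_bernSmooth C l₁ l₂ m u₁ u₂ v).deriv]
  refine (abs_sum_mul_prod_sub_le (p := fun h₁ => bern l₁ h₁ u₁) (q := fun h₂ => bern l₂ h₂ u₂)
      (r := fun k => bern (m - 1) k v)
      (a := fun h₁ h₂ k =>
        m * (C (h₁ / l₁) (h₂ / l₂) ((k + 1 : ℕ) / m) - C (h₁ / l₁) (h₂ / l₂) (k / m)))
      (fun _ _ => bern_nonneg_s4 _ _ hu₁) (fun _ _ => bern_nonneg_s4 _ _ hu₂)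
      (fun _ _ => bern_nonneg_s4 _ _ hv) (sum_bern l₁ u₁) (sum_bern l₂ u₂) hsum
      fun h₁ hh₁ h₂ hh₂ k hk => abs_slope_sub_le hderiv hLip hL
        (natCast_div_mem_Icc (Nat.lt_succ_iff.1 (mem_range.1 hh₁)))
        (natCast_div_mem_Icc (Nat.lt_succ_iff.1 (mem_range.1 hh₂))) hu₁ hu₂ hv
        (mem_range.1 hk)).trans ?_
  simp only [mul_assoc, ← mul_sum]
  linarith [mul_le_mul_of_nonneg_left (sum_abs_mul_bern_le (by omega : l₁ ≠ 0) hu₁) hL,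
    mul_le_mul_of_nonneg_left (sum_abs_mul_bern_le (by omega : l₂ ≠ 0) hu₂) hL,
    mul_le_mul_of_nonneg_left habs hL]
end
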